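/- The Wiener-Fliess composition product turns Cauchy products into shuffle products: for d, d' ∈ ℝ^k[[X̃]] (commuting variables, |X̃| = ℓ) and a proper series c ∈ ℝ^ℓ_p⟨⟨X⟩⟩, one has (d·d') ∘̂ c = (d ∘̂ c) ⧢ (d' ∘̂ c), where d ∘̂ c = Σ_{η∈X̃*} (d,η) c^{⧢η} with c^{⧢ x̃_i η} = c_i ⧢ c^{⧢η} and c^{⧢∅} = 1. Consequently, for purely improper d, d^{−1} ∘̂ c = (d ∘̂ c)^{⧢−1}. -/

import Mathlib

open scoped BigOperators

namespace FPS

/-- A (noncommutative) formal power series over alphabet `X` is a map from words to `ℝ`. -/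
abbrev Series (X : Type*) := List X → ℝ

noncomputable section

variable {X : Type*} [DecidableEq X]

/-- The series `1·∅`. -/
def one : Series X := fun η => if η = [] then 1 else 0

/-- Cauchy (concatenation) product. -/
def cauchy (c d : Series X) : Series X := fun η =>
  ∑ i ∈ Finset.range (η.length + 1), c (η.take i) * d (η.drop i)

/-- Shuffle product. -/
def sh (c d : Series X) : List X → ℝ
  | [] => c [] * d []
  | x :: t => sh (fun w => c (x :: w)) d t + sh c (fun w => d (x :: w)) t

/-- Cauchy powers. -/
def cpow (c : Series X) : ℕ → Series X
  | 0 => one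
  | k + 1 => cauchy c (cpow c k)

/-- Shuffle powers. -/
def shpow (c : Series X) : ℕ → Series X
  | 0 => one
  | k + 1 => sh c (shpow c k)

/-- The proper series `1 - s/(s,∅)` entering the inverse formulas (negated proper part of `s/(s,∅)`). -/
def sprime (s : Series X) : Series X := fun w => if w = [] then 0 else - (s w / s [])

/-- Cauchy inverse `(s,∅)⁻¹ Σ_k (s')^k` of a purely improper series. -/
def cInv (s : Series X) : Series X := fun η =>
  (s [])⁻¹ * ∑ k ∈ Finset.range (η.length + 1), cpow (sprime s) k η

/-- Shuffle inverse `(s,∅)⁻¹ Σ_k (s')^{⧢k}` of a purely improper series. -/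
def shInv (s : Series X) : Series X := fun η =>
  (s [])⁻¹ * ∑ k ∈ Finset.range (η.length + 1), shpow (sprime s) k η

/-- The order: minimal length of a word in the support (`⊤` for the zero series). -/
def ord (c : Series X) : ℕ∞ := sInf ((fun η : List X => (η.length : ℕ∞)) '' {η | c η ≠ 0})

/-- `σ^n` with `σ^⊤ = 0`. -/
def powE (σ : ℝ) : ℕ∞ → ℝ := fun n => if n = ⊤ then 0 else σ ^ n.toNat

/-- The ultrametric `κ(c,d) = σ^{ord(c-d)}`. -/
def kappa (σ : ℝ) (c d : Series X) : ℝ := powE σ (ord (c - d))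

/-- Order of a vector of series (minimum over components). -/
def ordV {n : ℕ} (c : Fin n → Series X) : ℕ∞ := ⨅ i, ord (c i)

/-- Ultrametric on vectors of series. -/
def kappaV (σ : ℝ) {n : ℕ} (c d : Fin n → Series X) : ℝ := powE σ (ordV (c - d))

/-- Proper part `c - (c,∅)∅`. -/
def properPart (c : Series X) : Series X := fun w => if w = [] then 0 else c w

/-- Left concatenation by a letter: `x·s`. -/
def leftc (x : X) (s : Series X) : Series X := fun η =>
  match η with
  | [] => 0
  | y :: t => if y = x then s t else 0

end

noncomputable section

/-- `φ̄_d(η)` : the algebra homomorphism defining the multiplicative mixed composition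
product, with `φ̄_d(x_0)(w) = x_0 w` and `φ̄_d(x_i)(w) = x_i (d_i ⧢ w)`. -/
def phiWord {m : ℕ} (d : Fin m → Series (Fin (m + 1))) :
    List (Fin (m + 1)) → Series (Fin (m + 1)) → Series (Fin (m + 1))
  | [], w => w
  | i :: t, w =>
      Fin.cases (leftc 0 (phiWord d t w)) (fun j => leftc j.succ (sh (d j) (phiWord d t w))) i

/-- Multiplicative mixed composition product `c ∘̄ δ_d = Σ_η (c,η) φ̄_d(η)(1)`. -/
def mix {m : ℕ} (c : Series (Fin (m + 1))) (d : Fin m → Series (Fin (m + 1))) :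
    Series (Fin (m + 1)) := fun η =>
  ∑ k ∈ Finset.range (η.length + 1),
    ∑ v : List.Vector (Fin (m + 1)) k, c v.toList * phiWord d v.toList one η

/-- `ψ_e(η)` : the algebra homomorphism defining the composition product, with
`ψ_e(x'_i)(w) = x_0 (e_i ⧢ w)`, `e_0 = 1∅`. -/
def psiWord {ℓ m : ℕ} (e : Fin ℓ → Series (Fin (m + 1))) :
    List (Fin (ℓ + 1)) → Series (Fin (m + 1)) → Series (Fin (m + 1))
  | [], w => w
  | i :: t, w => leftc 0 (sh (Fin.cases one e i) (psiWord e t w))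

/-- Composition product `c ∘ e = Σ_η (c,η) ψ_e(η)(1)`. -/
def comp {ℓ m : ℕ} (c : Series (Fin (ℓ + 1))) (e : Fin ℓ → Series (Fin (m + 1))) :
    Series (Fin (m + 1)) := fun η =>
  ∑ k ∈ Finset.range (η.length + 1),
    ∑ v : List.Vector (Fin (ℓ + 1)) k, c v.toList * psiWord e v.toList one η

/-- The multiplicative composition product on `δ`-series:
`δ_c ∘ δ_d = δ_{d ⧢ (c ∘̄ δ_d)}`, expressed on the underlying series. -/
def star {m : ℕ} (c d : Fin m → Series (Fin (m + 1))) : Fin m → Series (Fin (m + 1)) :=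
  fun i => sh (d i) (mix (c i) d)

/-- The all-ones series vector (generating series of the identity `δ_1`). -/
def oneV {X : Type*} [DecidableEq X] (m : ℕ) : Fin m → Series X := fun _ => one

open Classical in
/-- The inverse `d^{∘-1}` in the multiplicative dynamic output feedback group: the unique
solution of `e = d^{⧢-1} ∘̄ δ_e`. -/
def dynInv {m : ℕ} (d : Fin m → Series (Fin (m + 1))) : Fin m → Series (Fin (m + 1)) :=
  if h : ∃ e : Fin m → Series (Fin (m + 1)), e = fun i => mix (shInv (d i)) e then h.choose
  else oneV m

/-- Shuffle power of a family: `c^{⧢n} = c_1^{⧢n_1} ⧢ ⋯ ⧢ c_ℓ^{⧢n_ℓ}`. -/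
def shFam {X : Type*} [DecidableEq X] {ℓ : ℕ} (c : Fin ℓ → Series X) (n : Fin ℓ →₀ ℕ) :
    Series X :=
  (List.finRange ℓ).foldr (fun i acc => sh (shpow (c i) (n i)) acc) one

/-- Wiener-Fliess composition product `d ∘̂ c = Σ_{η∈X̃*} (d,η) c^{⧢η}` of a commutative
series `d` with a (proper) noncommutative series vector `c`. -/
def wf {X : Type*} [DecidableEq X] {ℓ : ℕ} (d : MvPowerSeries (Fin ℓ) ℝ)
    (c : Fin ℓ → Series X) : Series X := fun η =>
  ∑ n ∈ Finset.Iic (Finsupp.equivFunOnFinite.symm fun _ : Fin ℓ => η.length),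
    MvPowerSeries.coeff n d * shFam c n η

end

/-!
The shuffle product at a word `η` only sees its factors on words of length at most `|η|`, and since
`c` is proper, `c^{⧢n}` vanishes on words shorter than any `n i`. Hence at `η` the series
`d ∘̂ c` is a finite sum over the box `n ≤ (|η|, …, |η|)`, and on such finite sums the product
rule is just bilinearity of the shuffle product together with `c^{⧢(a+b)} = c^{⧢a} ⧢ c^{⧢b}`,
which holds because `⧢` is commutative and associative. For the inverse: `d⁻¹ ∘̂ c` is a shuffle
inverse of `d ∘̂ c` by the product rule and `1 ∘̂ c = 1`; so is `(d ∘̂ c)^{⧢-1}`, by a telescoping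
geometric series; and inverses in a commutative monoid are unique.
-/

section Shuffle

variable {X : Type*}

/-- The left shift `x⁻¹(s)`. -/
def shl (x : X) (s : Series X) : Series X := fun w => s (x :: w)

@[simp] lemma sh_nil (a b : Series X) : sh a b [] = a [] * b [] := rfl

lemma sh_cons (a b : Series X) (x : X) (w : List X) :
    sh a b (x :: w) = sh (shl x a) b w + sh a (shl x b) w := rfl

lemma shl_sh (x : X) (a b : Series X) : shl x (sh a b) = sh (shl x a) b + sh a (shl x b) := rfl

lemma sh_apply_congr (η : List X) {a a' b b' : Series X}
    (ha : ∀ w : List X, w.length ≤ η.length → a w = a' w)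
    (hb : ∀ w : List X, w.length ≤ η.length → b w = b' w) :
    sh a b η = sh a' b' η := by
  induction η generalizing a a' b b' with
  | nil => simp [ha [] le_rfl, hb [] le_rfl]
  | cons x w ih =>
    have shorter {s s' : Series X} (h : ∀ v : List X, v.length ≤ (x :: w).length → s v = s' v) :
        ∀ v : List X, v.length ≤ w.length → s v = s' v :=
      fun v hv => h v (by simp; omega)
    have shifted {s s' : Series X} (h : ∀ v : List X, v.length ≤ (x :: w).length → s v = s' v) :
        ∀ v : List X, v.length ≤ w.length → shl x s v = shl x s' v :=
      fun v hv => h (x :: v) (by simpa using hv)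
    rw [sh_cons, sh_cons, ih (shifted ha) (shorter hb), ih (shorter ha) (shifted hb)]

lemma sh_comm (a b : Series X) : sh a b = sh b a := by
  funext η
  induction η generalizing a b with
  | nil => simp [mul_comm]
  | cons x w ih => rw [sh_cons, sh_cons, ih (shl x a), ih a]; ring

lemma sh_add_left (a b t : Series X) : sh (a + b) t = sh a t + sh b t := by
  funext η
  induction η generalizing a b t with
  | nil => simp [add_mul]
  | cons x w ih =>
    simp only [sh_cons, Pi.add_apply]
    rw [show shl x (a + b) = shl x a + shl x b from rfl, ih, ih, Pi.add_apply, Pi.add_apply]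
    ring

lemma sh_smul_left (r : ℝ) (a t : Series X) : sh (r • a) t = r • sh a t := by
  funext η
  induction η generalizing a t with
  | nil => simp [mul_assoc]
  | cons x w ih =>
    simp only [sh_cons, Pi.smul_apply]
    rw [show shl x (r • a) = r • shl x a from rfl, ih, ih]
    simp [mul_add]

lemma sh_add_right (a s t : Series X) : sh a (s + t) = sh a s + sh a t := by
  rw [sh_comm, sh_add_left, sh_comm s, sh_comm t]

lemma sh_smul_right (r : ℝ) (a t : Series X) : sh a (r • t) = r • sh a t := by
  rw [sh_comm, sh_smul_left, sh_comm]

def shBilin : Series X →ₗ[ℝ] Series X →ₗ[ℝ] Series X :=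
  LinearMap.mk₂ ℝ sh sh_add_left sh_smul_left sh_add_right sh_smul_right

lemma shBilin_apply (a b : Series X) : shBilin a b = sh a b := rfl

lemma zero_sh (t : Series X) : sh 0 t = 0 := LinearMap.map_zero₂ shBilin t

lemma sh_assoc (a b c : Series X) : sh (sh a b) c = sh a (sh b c) := by
  funext η
  induction η generalizing a b c with
  | nil => simp [mul_assoc]
  | cons x w ih =>
    rw [sh_cons, sh_cons, shl_sh, shl_sh, sh_add_left, sh_add_right, Pi.add_apply, Pi.add_apply,
      ih, ih, ih]
    ring

lemma one_sh (a : Series X) : sh one a = a := by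
  funext η
  induction η generalizing a with
  | nil => simp [one]
  | cons x w ih =>
    have : shl x (one : Series X) = 0 := by funext v; simp [shl, one]
    rw [sh_cons, this, zero_sh, ih]
    simp [shl]

lemma sh_one (a : Series X) : sh a one = a := by rw [sh_comm, one_sh]

lemma sh_sh_sh_comm (a b c d : Series X) : sh (sh a b) (sh c d) = sh (sh a c) (sh b d) := by
  rw [sh_assoc, sh_assoc, ← sh_assoc b, ← sh_assoc c, sh_comm b c]

lemma eq_of_sh_eq_one {s t t' : Series X} (ht : sh s t = one) (ht' : sh s t' = one) :
    t = t' := by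
  rw [← one_sh t, ← ht', sh_comm s, sh_assoc, ht, sh_one]

lemma shpow_add (s : Series X) (a b : ℕ) : shpow s (a + b) = sh (shpow s a) (shpow s b) := by
  induction a with
  | zero => simp [shpow, one_sh]
  | succ a ih => rw [Nat.add_right_comm, shpow, shpow, ih, sh_assoc]

lemma sh_sum_smul_sum {ι κ : Type*} (s : Finset ι) (t : Finset κ) (r : ι → ℝ) (r' : κ → ℝ)
    (f : ι → Series X) (f' : κ → Series X) :
    sh (∑ i ∈ s, r i • f i) (∑ j ∈ t, r' j • f' j) =
      ∑ i ∈ s, ∑ j ∈ t, (r i * r' j) • sh (f i) (f' j) := by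
  simp only [← shBilin_apply (X := X), map_sum, LinearMap.sum_apply, map_smul, LinearMap.smul_apply,
    Finset.smul_sum, smul_smul]
  rw [Finset.sum_comm]
  simp only [mul_comm]

lemma sh_sub_left (a b t : Series X) : sh (a - b) t = sh a t - sh b t :=
  LinearMap.map_sub₂ shBilin a b t

lemma sh_sum_right {ι : Type*} (a : Series X) (s : Finset ι) (f : ι → Series X) :
    sh a (∑ i ∈ s, f i) = ∑ i ∈ s, sh a (f i) :=
  map_sum (shBilin a) f s

end Shuffle

section Order

variable {X : Type*}

/-- `p ≤ ord s`. -/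
def VanishesBelow (s : Series X) (p : ℕ) : Prop := ∀ w : List X, w.length < p → s w = 0

lemma vanishesBelow_zero (s : Series X) : VanishesBelow s 0 := fun _ h => absurd h (by omega)

lemma vanishesBelow_one {s : Series X} (h : s [] = 0) : VanishesBelow s 1 := by
  rintro (_ | _) hw
  · exact h
  · simp at hw

lemma VanishesBelow.shl {s : Series X} {p : ℕ} (hs : VanishesBelow s p) (x : X) :
    VanishesBelow (shl x s) (p - 1) :=
  fun w hw => hs (x :: w) (by simp; omega)

lemma VanishesBelow.sh {s t : Series X} {p q : ℕ} (hs : VanishesBelow s p)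
    (ht : VanishesBelow t q) : VanishesBelow (sh s t) (p + q) := by
  intro η
  induction η generalizing p q s t with
  | nil =>
    intro h
    rcases Nat.eq_zero_or_pos p with rfl | hp
    · simp [ht [] (by simpa using h)]
    · simp [hs [] hp]
  | cons x w ih =>
    intro h
    rw [sh_cons, ih (hs.shl x) ht (by simp at h; omega), ih hs (ht.shl x) (by simp at h; omega),
      add_zero]

lemma VanishesBelow.shpow {s : Series X} {p : ℕ} (hs : VanishesBelow s p)
    (k : ℕ) : VanishesBelow (shpow s k) (p * k) := by
  induction k with
  | zero => exact vanishesBelow_zero _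
  | succ k ih =>
    have h := hs.sh ih
    rwa [Nat.add_comm, ← Nat.mul_succ] at h

lemma shpow_vanishesBelow {s : Series X} (h : s [] = 0) (k : ℕ) :
    VanishesBelow (shpow s k) k := by
  simpa only [one_mul] using (vanishesBelow_one h).shpow k

end Order

section ShuffleInverse

variable {X : Type*}

lemma sh_one_sub_sum_shpow (s : Series X) (N : ℕ) :
    sh (one - s) (∑ k ∈ Finset.range N, shpow s k) = one - shpow s N := by
  simp only [sh_sum_right, sh_sub_left, one_sh]
  exact Finset.sum_range_sub' (shpow s) N

lemma sprime_nil (s : Series X) : sprime s [] = 0 := by simp [sprime]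

lemma eq_smul_one_sub_sprime {s : Series X} (hs : s [] ≠ 0) : s = s [] • (one - sprime s) := by
  funext w
  cases w with
  | nil => simp [one, sprime]
  | cons x t => simp [one, sprime, mul_div_cancel₀ _ hs]

lemma shInv_apply_eq_of_length_le (s : Series X) {N : ℕ} {w : List X} (hw : w.length ≤ N) :
    shInv s w = ((s [])⁻¹ • ∑ k ∈ Finset.range (N + 1), shpow (sprime s) k) w := by
  simp only [shInv, Pi.smul_apply, Finset.sum_apply, smul_eq_mul]
  congr 1
  refine Finset.sum_subset (Finset.range_subset_range.2 (by omega)) fun k _ hk => ?_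
  exact shpow_vanishesBelow (sprime_nil s) k w (by simp at hk; omega)

theorem sh_shInv {s : Series X} (hs : s [] ≠ 0) : sh s (shInv s) = one := by
  funext η
  rw [sh_apply_congr η (fun w _ => congrFun (eq_smul_one_sub_sprime hs) w)
      (fun w hw => shInv_apply_eq_of_length_le s hw),
    sh_smul_left, sh_smul_right, smul_smul, mul_inv_cancel₀ hs, one_smul,
    sh_one_sub_sum_shpow, Pi.sub_apply, shpow_vanishesBelow (sprime_nil s) _ η (by omega), sub_zero]

end ShuffleInverse

section ShuffleProduct

variable {X ι : Type*}

def shProd (L : List ι) (f : ι → Series X) : Series X := L.foldr (fun i acc => sh (f i) acc) one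

lemma shProd_cons (i : ι) (L : List ι) (f : ι → Series X) :
    shProd (i :: L) f = sh (f i) (shProd L f) := rfl

lemma shProd_sh (L : List ι) (f g : ι → Series X) :
    shProd L (fun i => sh (f i) (g i)) = sh (shProd L f) (shProd L g) := by
  induction L with
  | nil => exact (one_sh one).symm
  | cons i L ih => rw [shProd_cons, shProd_cons, shProd_cons, ih, sh_sh_sh_comm]

lemma shProd_one (L : List ι) : shProd L (fun _ => (one : Series X)) = one := by
  induction L with
  | nil => rfl
  | cons i L ih => rw [shProd_cons, ih, one_sh]

lemma VanishesBelow.shProd {L : List ι} {f : ι → Series X} {i : ι} {p : ℕ} (hi : i ∈ L)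
    (hf : VanishesBelow (f i) p) : VanishesBelow (shProd L f) p := by
  induction L with
  | nil => simp at hi
  | cons j L ih =>
    rw [shProd_cons]
    rcases List.mem_cons.1 hi with rfl | hi
    · simpa using hf.sh (vanishesBelow_zero _)
    · simpa using (vanishesBelow_zero (f j)).sh (ih hi)

end ShuffleProduct

open Finset in
lemma _root_.Finset.sum_Iic_sum_antidiagonal {A M : Type*} [AddCommMonoid A] [PartialOrder A]
    [CanonicallyOrderedAdd A] [LocallyFiniteOrderBot A] [HasAntidiagonal A] [DecidableEq A]
    [DecidableLE A] [AddCommMonoid M] (N : A) (g : A × A → M)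
    (hg : ∀ p ∈ Iic N ×ˢ Iic N, ¬ p.1 + p.2 ≤ N → g p = 0) :
    ∑ n ∈ Iic N, ∑ p ∈ antidiagonal n, g p = ∑ p ∈ Iic N ×ˢ Iic N, g p := by
  rw [sum_comm' (t' := {p ∈ Iic N ×ˢ Iic N | p.1 + p.2 ≤ N}) (s' := fun p => {p.1 + p.2})]
  · simp only [sum_singleton]
    exact sum_filter_of_ne fun p hp hne => by_contra fun h => hne (hg p hp h)
  · simp only [mem_Iic, HasAntidiagonal.mem_antidiagonal, mem_filter, mem_product, mem_singleton]
    rintro n p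
    constructor
    · rintro ⟨hn, rfl⟩
      exact ⟨rfl, ⟨le_self_add.trans hn, le_add_self.trans hn⟩, hn⟩
    · rintro ⟨rfl, -, hn⟩
      exact ⟨hn, rfl⟩

section WienerFliess

variable {X : Type*} [DecidableEq X] {ℓ : ℕ}

lemma shFam_eq_shProd (c : Fin ℓ → Series X) (n : Fin ℓ →₀ ℕ) :
    shFam c n = shProd (List.finRange ℓ) (fun i => shpow (c i) (n i)) := rfl

lemma shFam_add (c : Fin ℓ → Series X) (a b : Fin ℓ →₀ ℕ) :
    shFam c (a + b) = sh (shFam c a) (shFam c b) := by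
  simp only [shFam_eq_shProd, Finsupp.add_apply, shpow_add, shProd_sh]

lemma shFam_zero (c : Fin ℓ → Series X) : shFam c 0 = one := by
  simp only [shFam_eq_shProd, Finsupp.coe_zero, Pi.zero_apply]
  exact shProd_one _

lemma shFam_vanishesBelow {c : Fin ℓ → Series X} (hc : ∀ i, c i [] = 0) (n : Fin ℓ →₀ ℕ)
    (i : Fin ℓ) : VanishesBelow (shFam c n) (n i) :=
  (shpow_vanishesBelow (hc i) (n i)).shProd (List.mem_finRange i)

noncomputable def constFinsupp (ℓ N : ℕ) : Fin ℓ →₀ ℕ := Finsupp.equivFunOnFinite.symm fun _ => N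

lemma le_constFinsupp_iff {N : ℕ} {n : Fin ℓ →₀ ℕ} : n ≤ constFinsupp ℓ N ↔ ∀ i, n i ≤ N := by
  simp [constFinsupp, Finsupp.le_def]

lemma shFam_apply_eq_zero {c : Fin ℓ → Series X} (hc : ∀ i, c i [] = 0) {n : Fin ℓ →₀ ℕ}
    {η : List X} (hn : ¬ n ≤ constFinsupp ℓ η.length) : shFam c n η = 0 := by
  obtain ⟨i, hi⟩ := not_forall.1 (le_constFinsupp_iff.not.1 hn)
  exact shFam_vanishesBelow hc n i η (by omega)

noncomputable def wfTrunc (d : MvPowerSeries (Fin ℓ) ℝ) (c : Fin ℓ → Series X) (N : ℕ) :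
    Series X :=
  ∑ n ∈ Finset.Iic (constFinsupp ℓ N), MvPowerSeries.coeff n d • shFam c n

lemma wf_apply_eq_wfTrunc (d : MvPowerSeries (Fin ℓ) ℝ) {c : Fin ℓ → Series X}
    (hc : ∀ i, c i [] = 0) {N : ℕ} {η : List X} (hη : η.length ≤ N) :
    wf d c η = wfTrunc d c N η := by
  simp only [wfTrunc, Finset.sum_apply, Pi.smul_apply, smul_eq_mul]
  refine Finset.sum_subset (Finset.Iic_subset_Iic.2 (le_constFinsupp_iff.2 fun i => ?_))
    fun n _ hn => ?_
  · simpa [constFinsupp] using hη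
  · rw [shFam_apply_eq_zero hc (Finset.mem_Iic.not.1 hn), mul_zero]

theorem wf_mul (d d' : MvPowerSeries (Fin ℓ) ℝ) {c : Fin ℓ → Series X} (hc : ∀ i, c i [] = 0) :
    wf (d * d') c = sh (wf d c) (wf d' c) := by
  funext η
  let S := Finset.Iic (constFinsupp ℓ η.length)
  let g : (Fin ℓ →₀ ℕ) × (Fin ℓ →₀ ℕ) → ℝ := fun p =>
    MvPowerSeries.coeff p.1 d * MvPowerSeries.coeff p.2 d' * shFam c (p.1 + p.2) η
  have lhs : wf (d * d') c η = ∑ p ∈ S ×ˢ S, g p := by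
    rw [← Finset.sum_Iic_sum_antidiagonal _ g fun p _ hp => by
      simp [g, shFam_apply_eq_zero hc hp]]
    refine Finset.sum_congr rfl fun n _ => ?_
    rw [MvPowerSeries.coeff_mul, Finset.sum_mul]
    refine Finset.sum_congr rfl fun p hp => ?_
    rw [← Finset.HasAntidiagonal.mem_antidiagonal.1 hp]
  have rhs : sh (wf d c) (wf d' c) η = ∑ p ∈ S ×ˢ S, g p := by
    rw [sh_apply_congr η (fun w hw => wf_apply_eq_wfTrunc d hc hw)
      (fun w hw => wf_apply_eq_wfTrunc d' hc hw), wfTrunc, wfTrunc, sh_sum_smul_sum,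
      Finset.sum_product]
    simp only [Finset.sum_apply, Pi.smul_apply, smul_eq_mul, S, g, shFam_add]
  rw [lhs, rhs]

lemma wf_one (c : Fin ℓ → Series X) : wf 1 c = one := by
  funext η
  simp [wf, MvPowerSeries.coeff_one, shFam_zero]

lemma wf_nil (d : MvPowerSeries (Fin ℓ) ℝ) (c : Fin ℓ → Series X) :
    wf d c [] = MvPowerSeries.constantCoeff d := by
  have h0 : constFinsupp ℓ 0 = 0 := by ext; simp [constFinsupp]
  change ∑ n ∈ Finset.Iic (constFinsupp ℓ 0), _ = _
  rw [h0, ← bot_eq_zero, Finset.Iic_bot, Finset.sum_singleton, bot_eq_zero, shFam_zero]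
  simp [one]

end WienerFliess

/-- The Wiener-Fliess composition product turns Cauchy products into
shuffle products: `(d · d') ∘̂ c = (d ∘̂ c) ⧢ (d' ∘̂ c)` for proper `c`; consequently for
purely improper `d`, `d⁻¹ ∘̂ c = (d ∘̂ c)^{⧢-1}`. -/
theorem wf_cauchy_to_shuffle (k ℓ m : ℕ)
    (d d' : Fin k → MvPowerSeries (Fin ℓ) ℝ) (c : Fin ℓ → Series (Fin (m + 1)))
    (hc : ∀ i, c i [] = 0) :
    (∀ i : Fin k, wf (d i * d' i) c = sh (wf (d i) c) (wf (d' i) c)) ∧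
    ((∀ i, MvPowerSeries.constantCoeff (d i) ≠ 0) →
      ∀ i : Fin k, wf (d i)⁻¹ c = shInv (wf (d i) c)) := by
  refine ⟨fun i => wf_mul (d i) (d' i) hc, fun hd i => ?_⟩
  have hs : wf (d i) c [] ≠ 0 := by rw [wf_nil]; exact hd i
  refine eq_of_sh_eq_one ?_ (sh_shInv hs)
  rw [← wf_mul _ _ hc, MvPowerSeries.mul_inv_cancel _ (hd i), wf_one]

end FPS
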